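/- Let A be a subalgebra of C_c(W) that is dense with respect to the strict inductive limit topology, and let μ, ν be distinct Radon measures on W. Then there exists g ∈ A such that ∫ g dμ ≠ ∫ g dν. -/

import Mathlib

/-! Setup: the birth-death plane, the space `C_c(W)` of compactly supported continuous
functions, the strict inductive limit (LF) topology on it, and Radon measures on `W`. -/

noncomputable section

open MeasureTheory Topology Filter Set Function
open scoped ENNReal

/-- The ambient plane `ℝ²`. -/
abbrev P2 : Type := ℝ × ℝ

/-- The birth-death plane `W = {(b,d) : b < d}`. -/
def Wbd : Set P2 := {p | p.1 < p.2}

/-- `C_c(W)` as a submodule of `P2 → ℝ`: continuous, compactly supported functions with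
(closed) support contained in the open set `W`, extended by zero to the plane. -/
def CcW : Submodule ℝ (P2 → ℝ) where
  carrier := {f | Continuous f ∧ HasCompactSupport f ∧ tsupport f ⊆ Wbd}
  zero_mem' := by
    refine ⟨continuous_zero, ?_, ?_⟩ <;>
      simp [HasCompactSupport, tsupport_eq_empty_iff.mpr rfl]
  add_mem' := by
    rintro f g ⟨hfc, hfs, hfW⟩ ⟨hgc, hgs, hgW⟩
    exact ⟨hfc.add hgc, hfs.add hgs, (tsupport_add f g).trans (union_subset hfW hgW)⟩
  smul_mem' := by
    rintro c f ⟨hfc, hfs, hfW⟩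
    refine ⟨hfc.const_smul c, ?_, ?_⟩
    · exact hfs.mono (support_const_smul_subset c f)
    · exact (closure_mono (support_const_smul_subset c f)).trans hfW

/-- The topology of uniform (sup-norm) convergence on the subspace
`C_c(K) = {f ∈ C_c(W) : supp f ⊆ K}`. -/
def supNormTop (K : Set P2) : TopologicalSpace {g : ↥CcW // tsupport (g : P2 → ℝ) ⊆ K} :=
  TopologicalSpace.induced (fun g => UniformFun.ofFun (g.1 : P2 → ℝ)) inferInstance

/-- `t` is a locally convex (vector space) topology on `C_c(W)`. -/
def IsLocallyConvexTop (t : TopologicalSpace ↥CcW) : Prop :=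
  @IsTopologicalAddGroup ↥CcW t _ ∧ @ContinuousSMul ℝ ↥CcW _ _ t ∧
    @LocallyConvexSpace ℝ ↥CcW _ _ _ _ t

/-- The strict inductive limit topology on `C_c(W)`: the finest locally convex topology
making every inclusion `C_c(K) ↪ C_c(W)`, `K ⊆ W` compact, continuous (recall that in
the lattice of topologies on a type, `≤` means finer, so the finest such topology is the
infimum). -/
def lfTopology : TopologicalSpace ↥CcW :=
  sInf {t | IsLocallyConvexTop t ∧
    ∀ K : Set P2, IsCompact K → K ⊆ Wbd →
      @Continuous _ _ (supNormTop K) t (Subtype.val : {g : ↥CcW // tsupport (g : P2 → ℝ) ⊆ K} → ↥CcW)}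

/-- `μ` is a Radon measure on the subspace `S`: it vanishes off `S`, is inner regular
(on relatively open sets) by compact sets, outer regular (by relatively open sets), and
finite on compact subsets of `S`. -/
def RadonOn {α : Type*} [TopologicalSpace α] [MeasurableSpace α] (S : Set α)
    (μ : Measure α) : Prop :=
  μ Sᶜ = 0 ∧
  (∀ U : Set α, IsOpen U → μ (U ∩ S) = ⨆ (K : Set α) (_ : K ⊆ U ∩ S) (_ : IsCompact K), μ K) ∧
  (∀ E : Set α, E ⊆ S → MeasurableSet E →
    μ E = ⨅ (U : Set α) (_ : IsOpen U) (_ : E ⊆ U), μ (U ∩ S)) ∧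
  (∀ K : Set α, K ⊆ S → IsCompact K → μ K < ⊤)

/-! The functional `g ↦ ∫ g dμ` is linear and, on each `C_c(K)`, bounded by `μ K` times the
sup norm; so the topology it induces is one of the locally convex topologies in the infimum
defining the inductive limit topology, and it is continuous for the latter. If `μ` and `ν`
integrate every `g ∈ A` alike, the two continuous functionals agree on the dense set `A`, hence
on all of `C_c(W)`. Finally a Radon measure on `W` is determined by these integrals: Urysohn
bumps squeezed between `1_K` and `1_U` compare `μ K` with `ν U` for compact `K ⊆ U`, outer
regularity gives equality on compact sets, and inner then outer regularity propagate it to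
relatively open and then to all Borel sets. -/

theorem isOpen_Wbd : IsOpen Wbd := isOpen_lt continuous_fst continuous_snd

namespace RadonOn

variable {α : Type*} [TopologicalSpace α] [MeasurableSpace α] {S : Set α} {μ ν : Measure α}

theorem measure_lt_top (hμ : RadonOn S μ) {K : Set α} (hKS : K ⊆ S) (hK : IsCompact K) :
    μ K < ⊤ :=
  hμ.2.2.2 K hKS hK

variable [OpensMeasurableSpace α]

theorem integrable_of_hasCompactSupport (hμ : RadonOn S μ) {f : α → ℝ} (hf : Continuous f)
    (hfc : HasCompactSupport f) (hfS : tsupport f ⊆ S) : Integrable f μ := by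
  have : IsFiniteMeasure (μ.restrict (tsupport f)) :=
    isFiniteMeasure_restrict.2 (hμ.measure_lt_top hfS hfc).ne
  exact (integrableOn_iff_integrable_of_support_subset (subset_tsupport f)).1
    (hf.integrable_of_hasCompactSupport hfc)

variable [T2Space α] [LocallyCompactSpace α]

theorem measure_le_of_forall_integral_eq (hS : IsOpen S) (hμ : RadonOn S μ) (hν : RadonOn S ν)
    (h : ∀ f : α → ℝ, Continuous f → HasCompactSupport f → tsupport f ⊆ S →
      ∫ x, f x ∂μ = ∫ x, f x ∂ν)
    {K : Set α} (hK : IsCompact K) (hKS : K ⊆ S) : μ K ≤ ν K := by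
  refine ENNReal.le_of_forall_pos_le_add fun ε hε _ => ?_
  obtain ⟨U, hU, hKU, hUε⟩ : ∃ U, IsOpen U ∧ K ⊆ U ∧ ν (U ∩ S) < ν K + ε := by
    have : ⨅ (U : Set α) (_ : IsOpen U) (_ : K ⊆ U), ν (U ∩ S) < ν K + ε := by
      rw [← hν.2.2.1 K hKS hK.measurableSet]
      exact ENNReal.lt_add_right (hν.measure_lt_top hKS hK).ne (ENNReal.coe_ne_zero.2 hε.ne')
    simpa only [iInf_lt_iff, exists_prop] using this
  obtain ⟨f, hf1, hfc, hfU, hf01⟩ :=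
    exists_continuousMap_one_of_isCompact_subset_isOpen hK (hU.inter hS) (subset_inter hKU hKS)
  have hfS : tsupport f ⊆ S := hfU.trans inter_subset_right
  have hfcs : HasCompactSupport f := hfc
  have hK_le : K.indicator 1 ≤ fun x => ENNReal.ofReal (f x) := fun x => by
    by_cases hx : x ∈ K
    · simp [hx, hf1 hx]
    · simp [hx]
  have hU_le : (fun x => ENNReal.ofReal (f x)) ≤ (U ∩ S).indicator 1 := fun x => by
    by_cases hx : x ∈ U ∩ S
    · simpa [hx] using (hf01 x).2
    · simp [hx, image_eq_zero_of_notMem_tsupport (fun h => hx (hfU h))]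
  have hlint : ∀ ρ : Measure α, RadonOn S ρ →
      ∫⁻ x, ENNReal.ofReal (f x) ∂ρ = ENNReal.ofReal (∫ x, f x ∂ρ) := fun ρ hρ =>
    (ofReal_integral_eq_lintegral_ofReal (hρ.integrable_of_hasCompactSupport f.continuous hfcs hfS)
      (ae_of_all _ fun x => (hf01 x).1)).symm
  calc μ K = ∫⁻ x, K.indicator 1 x ∂μ := (lintegral_indicator_one hK.measurableSet).symm
    _ ≤ ∫⁻ x, ENNReal.ofReal (f x) ∂μ := lintegral_mono hK_le
    _ = ∫⁻ x, ENNReal.ofReal (f x) ∂ν := by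
      rw [hlint μ hμ, hlint ν hν, h f f.continuous hfcs hfS]
    _ ≤ ∫⁻ x, (U ∩ S).indicator 1 x ∂ν := lintegral_mono hU_le
    _ = ν (U ∩ S) := lintegral_indicator_one (hU.inter hS).measurableSet
    _ ≤ ν K + ε := hUε.le

theorem ext_of_forall_integral_eq (hS : IsOpen S) (hμ : RadonOn S μ) (hν : RadonOn S ν)
    (h : ∀ f : α → ℝ, Continuous f → HasCompactSupport f → tsupport f ⊆ S →
      ∫ x, f x ∂μ = ∫ x, f x ∂ν) : μ = ν := by
  have hcompact : ∀ K, IsCompact K → K ⊆ S → μ K = ν K := fun K hK hKS =>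
    le_antisymm (measure_le_of_forall_integral_eq hS hμ hν h hK hKS)
      (measure_le_of_forall_integral_eq hS hν hμ (fun f hf hfc hfS => (h f hf hfc hfS).symm)
        hK hKS)
  have hopen : ∀ U, IsOpen U → μ (U ∩ S) = ν (U ∩ S) := fun U hU => by
    rw [hμ.2.1 U hU, hν.2.1 U hU]
    exact iSup_congr fun K => iSup_congr fun hK => iSup_congr fun hKc =>
      hcompact K hKc (hK.trans inter_subset_right)
  ext E hE
  rw [← measure_inter_conull hμ.1, ← measure_inter_conull hν.1,
    hμ.2.2.1 _ inter_subset_right (hE.inter hS.measurableSet),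
    hν.2.2.1 _ inter_subset_right (hE.inter hS.measurableSet)]
  exact iInf_congr fun U => iInf_congr fun hU => iInf_congr fun _ => hopen U hU

end RadonOn

theorem dist_integral_le_mul_measureReal {α : Type*} [MeasurableSpace α] {μ : Measure α}
    {f g : α → ℝ} {K : Set α} (hK : μ K < ⊤) (hf : Integrable f μ) (hg : Integrable g μ)
    (hfK : support f ⊆ K) (hgK : support g ⊆ K) {δ : ℝ} (hδ : ∀ x, dist (f x) (g x) ≤ δ) :
    dist (∫ x, f x ∂μ) (∫ x, g x ∂μ) ≤ δ * μ.real K := by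
  have hzero : ∀ x ∉ K, f x - g x = 0 := fun x hx => by
    rw [notMem_support.1 fun h => hx (hfK h), notMem_support.1 fun h => hx (hgK h), sub_self]
  rw [dist_eq_norm, ← integral_sub hf hg, ← setIntegral_eq_integral_of_forall_compl_eq_zero hzero]
  exact norm_setIntegral_le_of_norm_le_const hK fun x _ => dist_eq_norm (f x) (g x) ▸ hδ x

theorem isLocallyConvexTop_induced {E : Type*} [AddCommGroup E] [Module ℝ E] [TopologicalSpace E]
    [IsTopologicalAddGroup E] [ContinuousSMul ℝ E] [LocallyConvexSpace ℝ E] (L : ↥CcW →ₗ[ℝ] E) :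
    IsLocallyConvexTop (TopologicalSpace.induced L ‹_›) :=
  ⟨topologicalAddGroup_induced L, continuousSMul_induced L, LocallyConvexSpace.induced L⟩

theorem continuous_lfTopology_of_continuous_supNormTop {E : Type*} [AddCommGroup E] [Module ℝ E]
    [TopologicalSpace E] [IsTopologicalAddGroup E] [ContinuousSMul ℝ E] [LocallyConvexSpace ℝ E]
    (L : ↥CcW →ₗ[ℝ] E)
    (hL : ∀ K : Set P2, IsCompact K → K ⊆ Wbd →
      Continuous[supNormTop K, _] fun g : {g : ↥CcW // tsupport (g : P2 → ℝ) ⊆ K} => L g) :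
    Continuous[lfTopology, _] L :=
  continuous_le_dom (sInf_le ⟨isLocallyConvexTop_induced L, fun K hK hKW =>
    continuous_induced_rng.2 (hL K hK hKW)⟩) continuous_induced_dom

namespace RadonOn

variable {μ : Measure P2}

theorem integrable_of_mem_CcW (hμ : RadonOn Wbd μ) {f : P2 → ℝ} (hf : f ∈ CcW) : Integrable f μ :=
  hμ.integrable_of_hasCompactSupport hf.1 hf.2.1 hf.2.2

theorem continuous_integral_supNormTop (hμ : RadonOn Wbd μ) {K : Set P2} (hK : IsCompact K)
    (hKW : K ⊆ Wbd) :
    Continuous[supNormTop K, _] fun g : {g : ↥CcW // tsupport (g : P2 → ℝ) ⊆ K} =>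
      ∫ x, (g : P2 → ℝ) x ∂μ := by
  let := supNormTop K
  refine continuous_iff_continuousAt.2 fun g₀ => ?_
  rw [ContinuousAt, show 𝓝 g₀ = _ from nhds_induced _ g₀,
    ((UniformFun.hasBasis_nhds_of_basis P2 ℝ _ Metric.uniformity_basis_dist).comap _).tendsto_iff
      Metric.nhds_basis_closedBall]
  intro ε hε
  have hm : 0 ≤ μ.real K := measureReal_nonneg
  refine ⟨ε / (μ.real K + 1), by positivity, fun g hg => ?_⟩
  calc dist (∫ x, (g : P2 → ℝ) x ∂μ) (∫ x, (g₀ : P2 → ℝ) x ∂μ)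
      ≤ ε / (μ.real K + 1) * μ.real K :=
        dist_integral_le_mul_measureReal (hμ.measure_lt_top hKW hK)
          (hμ.integrable_of_mem_CcW g.1.2) (hμ.integrable_of_mem_CcW g₀.1.2)
          ((subset_tsupport _).trans g.2) ((subset_tsupport _).trans g₀.2)
          fun x => dist_comm (g₀.1.1 x) (g.1.1 x) ▸ (hg x).le
    _ ≤ ε := by
        rw [div_mul_eq_mul_div, div_le_iff₀ (by positivity)]
        nlinarith

def integralₗ (hμ : RadonOn Wbd μ) : ↥CcW →ₗ[ℝ] ℝ where
  toFun g := ∫ x, (g : P2 → ℝ) x ∂μ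
  map_add' f g := integral_add (hμ.integrable_of_mem_CcW f.2) (hμ.integrable_of_mem_CcW g.2)
  map_smul' c _ := integral_smul c _

theorem continuous_integralₗ (hμ : RadonOn Wbd μ) : Continuous[lfTopology, _] hμ.integralₗ :=
  continuous_lfTopology_of_continuous_supNormTop _ fun _ hK hKW =>
    hμ.continuous_integral_supNormTop hK hKW

end RadonOn

theorem dense_subalgebra_separates_measures_general
    (A : NonUnitalSubalgebra ℝ (P2 → ℝ))
    (hdense : @Dense ↥CcW lfTopology {g : ↥CcW | (g : P2 → ℝ) ∈ A})
    (μ ν : Measure P2) (hμ : RadonOn Wbd μ) (hν : RadonOn Wbd ν) (hne : μ ≠ ν) :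
    ∃ g : P2 → ℝ, g ∈ A ∧ ∫ x, g x ∂μ ≠ ∫ x, g x ∂ν := by
  by_contra! hsep
  let := lfTopology
  have hint : (hμ.integralₗ : ↥CcW → ℝ) = hν.integralₗ :=
    hμ.continuous_integralₗ.ext_on hdense hν.continuous_integralₗ fun g hg => hsep g hg
  refine hne (hμ.ext_of_forall_integral_eq isOpen_Wbd hν fun f hf hfc hfW => ?_)
  exact congrFun hint ⟨f, hf, hfc, hfW⟩

/-- If `A` is a subalgebra of `C_c(W)` that is dense for the strict
inductive limit topology, then `A` separates distinct Radon measures on `W`: there is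
`g ∈ A` with `∫ g dμ ≠ ∫ g dν`. -/
theorem dense_subalgebra_separates_measures
    (A : NonUnitalSubalgebra ℝ (P2 → ℝ)) (hAsub : (A : Set (P2 → ℝ)) ⊆ (CcW : Set (P2 → ℝ)))
    (hdense : @Dense ↥CcW lfTopology {g : ↥CcW | (g : P2 → ℝ) ∈ A})
    (μ ν : Measure P2) (hμ : RadonOn Wbd μ) (hν : RadonOn Wbd ν) (hne : μ ≠ ν) :
    ∃ g : P2 → ℝ, g ∈ A ∧ ∫ x, g x ∂μ ≠ ∫ x, g x ∂ν :=
  dense_subalgebra_separates_measures_general A hdense μ ν hμ hν hne
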